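/- arXiv:1709.08211 — 3 statements merged into one kernel-verified Lean document; each statement's English description precedes it below -/
import Mathlib

section
/- Let A be a unital C*-algebra, let V be a subgroup of its unitary group U(A), let a ∈ A and let φ ∈ A*. Then the set {ψ(a) : ψ ∈ D_A(φ,V)} equals the closure in ℂ of the set {φ(b) : b ∈ D_A(a,V)}. -/
open scoped ComplexOrder Pointwise

noncomputable section

variable (A : Type*) [CStarAlgebra A]

/-- The functional `uφu* : x ↦ φ (u * x * star u)`. -/
def conjF (u : A) (φ : A →L[ℂ] ℂ) : A →L[ℂ] ℂ :=
  φ.comp (ContinuousLinearMap.mulLeftRight ℂ A u (star u))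

/-- The weak*-closure of a set of continuous linear functionals. -/
def wsClosure (S : Set (A →L[ℂ] ℂ)) : Set (A →L[ℂ] ℂ) :=
  StrongDual.toWeakDual ⁻¹' closure (StrongDual.toWeakDual '' S)

/-- The Dixmier set `D_A(φ, V)`: the weak*-closed convex hull of `{uφu* : u ∈ V}`. -/
def DixF (V : Set A) (φ : A →L[ℂ] ℂ) : Set (A →L[ℂ] ℂ) :=
  wsClosure A (convexHull ℝ ((fun u => conjF A u φ) '' V))

/-- The Dixmier set `D_A(a, V)`: the norm-closed convex hull of `{uau* : u ∈ V}`. -/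
def DixE (V : Set A) (a : A) : Set A :=
  closure (convexHull ℝ ((fun u => u * a * star u) '' V))

/-- The Dixmier set `D_A(φ)` (conjugation by the full unitary group `U(A)`). -/
def Dix (φ : A →L[ℂ] ℂ) : Set (A →L[ℂ] ℂ) := DixF A (unitary A : Set A) φ

/-- A functional is maximally mixed if `φ ∈ D_A(ψ)` for every `ψ ∈ D_A(φ)`. -/
def MaxMixed (φ : A →L[ℂ] ℂ) : Prop := ∀ ψ ∈ Dix A φ, φ ∈ Dix A ψ

/-- Positive functionals: `φ(x*x) ≥ 0` for all `x`. -/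
def IsPos (φ : A →L[ℂ] ℂ) : Prop := ∀ x : A, 0 ≤ φ (star x * x)

/-- States: positive functionals with `φ(1) = 1`. -/
def IsState (φ : A →L[ℂ] ℂ) : Prop := IsPos A φ ∧ φ 1 = 1

/-- Tracial functionals: `φ(xy) = φ(yx)`. -/
def IsTracial (φ : A →L[ℂ] ℂ) : Prop := ∀ x y : A, φ (x * y) = φ (y * x)

/-!
Evaluation at `a` is weak*-continuous and ℝ-linear, and it turns `uφu*` into `φ(uau*)`; hence
it maps the convex hull of `{uφu*}` onto `φ` of the convex hull of `{uau*}`. The conjugates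
`uφu*` all have norm at most `‖φ‖`, so by Banach–Alaoglu the weak*-closure of their convex hull
is compact, and a continuous map sends the closure of a set with compact closure onto the closure
of its image.
-/

open Bornology

theorem WeakDual.image_eval_closure {𝕜 E : Type*} [NontriviallyNormedField 𝕜] [ProperSpace 𝕜]
    [SeminormedAddCommGroup E] [NormedSpace 𝕜 E] {s : Set (WeakDual 𝕜 E)} (hs : IsBounded s)
    (x : E) : (fun f : WeakDual 𝕜 E => f x) '' closure s = closure ((fun f => f x) '' s) :=
  image_closure_of_isCompact
    (isCompact_of_bounded_of_closed (isBounded_closure hs) isClosed_closure)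
    (eval_continuous x).continuousOn

variable {A}

theorem image_apply_wsClosure {S : Set (A →L[ℂ] ℂ)} (hS : IsBounded S) (a : A) :
    (fun ψ : A →L[ℂ] ℂ => ψ a) '' wsClosure A S = closure ((fun ψ : A →L[ℂ] ℂ => ψ a) '' S) := by
  have hS' : IsBounded (StrongDual.toWeakDual '' S) := by
    rw [LinearEquiv.image_eq_preimage_symm]
    exact hS
  calc (fun ψ : A →L[ℂ] ℂ => ψ a) '' wsClosure A S
      = (fun f : WeakDual ℂ A => f a) '' (StrongDual.toWeakDual '' wsClosure A S) := by
        rw [Set.image_image]; rfl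
    _ = (fun f : WeakDual ℂ A => f a) '' closure (StrongDual.toWeakDual '' S) := by
        rw [wsClosure, Set.image_preimage_eq _ StrongDual.toWeakDual.surjective]
    _ = closure ((fun ψ : A →L[ℂ] ℂ => ψ a) '' S) := by
        rw [WeakDual.image_eval_closure hS', Set.image_image]
        rfl

@[simp]
theorem conjF_apply (u : A) (φ : A →L[ℂ] ℂ) (x : A) : conjF A u φ x = φ (u * x * star u) := rfl

theorem norm_conjF_le (u : unitary A) (φ : A →L[ℂ] ℂ) : ‖conjF A u φ‖ ≤ ‖φ‖ :=
  ContinuousLinearMap.opNorm_le_bound _ (norm_nonneg φ) fun x => by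
    have hx : ‖(u : A) * x * star (u : A)‖ = ‖x‖ := by
      rw [← Unitary.coe_star, CStarRing.norm_mul_coe_unitary, CStarRing.norm_coe_unitary_mul]
    simpa [hx] using φ.le_opNorm (u * x * star u)

theorem isBounded_range_conjF (φ : A →L[ℂ] ℂ) :
    IsBounded (Set.range fun u : unitary A => conjF A u φ) :=
  (Metric.isBounded_closedBall (x := 0) (r := ‖φ‖)).subset <| Set.range_subset_iff.2 fun u => by
    simpa using norm_conjF_le u φ

/-- Let `A` be a unital C*-algebra, `V` a subgroup of its unitary
group, `a ∈ A` and `φ ∈ A*`.  Then `{ψ(a) : ψ ∈ D_A(φ,V)}` equals the closure in `ℂ`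
of `{φ(b) : b ∈ D_A(a,V)}`. -/
theorem stmt0 (A : Type*) [CStarAlgebra A] (V : Subgroup (unitary A)) (a : A)
    (φ : A →L[ℂ] ℂ) :
    (fun ψ : A →L[ℂ] ℂ => ψ a) '' DixF A (((↑) : unitary A → A) '' (V : Set (unitary A))) φ
      = closure (φ '' DixE A (((↑) : unitary A → A) '' (V : Set (unitary A))) a) := by
  set U := ((↑) : unitary A → A) '' (V : Set (unitary A))
  have hbdd : IsBounded ((fun u => conjF A u φ) '' U) :=
    (isBounded_range_conjF φ).subset <| by rintro _ ⟨_, ⟨u, -, rfl⟩, rfl⟩; exact ⟨u, rfl⟩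
  have heval : (fun ψ : A →L[ℂ] ℂ => ψ a) '' ((fun u => conjF A u φ) '' U)
      = φ '' ((fun u => u * a * star u) '' U) := by
    simp only [Set.image_image, conjF_apply]
  calc (fun ψ : A →L[ℂ] ℂ => ψ a) '' DixF A U φ
      = closure ((fun ψ : A →L[ℂ] ℂ => ψ a) '' convexHull ℝ ((fun u => conjF A u φ) '' U)) :=
        image_apply_wsClosure (isBounded_convexHull.2 hbdd) a
    _ = closure (convexHull ℝ (φ '' ((fun u => u * a * star u) '' U))) := by
        have hlin : IsLinearMap ℝ fun ψ : A →L[ℂ] ℂ => ψ a := ⟨fun _ _ => rfl, fun _ _ => rfl⟩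
        rw [hlin.image_convexHull, heval]
    _ = closure (φ '' convexHull ℝ ((fun u => u * a * star u) '' U)) := by
        rw [(⟨φ.map_add, φ.map_smul_of_tower⟩ : IsLinearMap ℝ φ).image_convexHull]
    _ = closure (φ '' DixE A U a) := (closure_image_closure φ.continuous).symm
end
end

section
/- Let A be a unital C*-algebra with the Dixmier property. Then: (a) for every bounded linear functional μ on the center Z(A) there exists a maximally mixed φ ∈ A* whose restriction to Z(A) equals μ; (b) if φ, ψ ∈ A* are maximally mixed and agree on Z(A), then D_A(φ) = D_A(ψ). Consequently, the map φ ↦ φ|_{Z(A)} induces a bijection between equivalence classes of maximally mixed functionals (φ ~ ψ iff D_A(φ) = D_A(ψ)) and bounded functionals on Z(A). -/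
/-!
Let `𝒜 ⊆ A →L[ℂ] A` be the convex hull of the conjugations `x ↦ u x u*`, `u` unitary: a monoid of
contractions fixing the centre pointwise, with `D(φ)` the weak*-closure of `{φ ∘ T : T ∈ 𝒜}`.
Hence `ψ ∈ D(φ)` implies `D(ψ) ⊆ D(φ)`, every `D(φ)` is weak*-compact by Banach–Alaoglu, and all
elements of `D(φ)` agree with `φ` on the centre.

(a) Extend `μ` to `φ` by Hahn–Banach; by Zorn's lemma and compactness, some `D(σ)` with
`σ ∈ D(φ)` is minimal among such sets, which makes `σ` maximally mixed.

(b) Composing the averages supplied by the Dixmier property, for every finite `F ⊆ A` and `ε > 0`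
some `T ∈ 𝒜` moves each `a ∈ F` to within `ε` of the centre. If `φ` and `ψ` agree on the centre,
`(φ - ψ) ∘ T` is then small on `F`, so by compactness `D(φ)` and `D(ψ)` meet at some `σ`, and
maximality gives `D(φ) = D(σ) = D(ψ)`.
-/

open scoped ComplexOrder Pointwise

noncomputable section

variable (A : Type*) [CStarAlgebra A]

/-- The restriction of a functional `φ ∈ A*` to the center `Z(A)`. -/
def restrZ (φ : A →L[ℂ] ℂ) : (Subalgebra.center ℂ A) →L[ℂ] ℂ :=
  { toFun := fun z => φ (z : A)
    map_add' := fun x y => by simp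
    map_smul' := fun c x => by simp
    cont := φ.continuous.comp continuous_subtype_val }

theorem exists_mem_minimal_of_isCompact {X : Type*} [TopologicalSpace X] [T2Space X]
    (F : X → Set X) (self_mem : ∀ x, x ∈ F x) (isCompact : ∀ x, IsCompact (F x))
    (subset_of_mem : ∀ x y, y ∈ F x → F y ⊆ F x) (x₀ : X) :
    ∃ x ∈ F x₀, ∀ y ∈ F x, x ∈ F y := by
  let S := {K | ∃ x ∈ F x₀, K = F x}
  have chain_bound : ∀ c ⊆ S, IsChain (· ⊆ ·) c → c.Nonempty → ∃ lb ∈ S, ∀ K ∈ c, lb ⊆ K := by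
    rintro c hcS hc ⟨K₀, hK₀⟩
    have : Nonempty c := ⟨⟨K₀, hK₀⟩⟩
    obtain ⟨y, hy⟩ := IsCompact.nonempty_sInter_of_directed_nonempty_isCompact_isClosed
      (fun K hK L hL => (hc.total hK hL).elim (fun h => ⟨K, hK, subset_rfl, h⟩)
        (fun h => ⟨L, hL, h, subset_rfl⟩))
      (fun K hK => by obtain ⟨x, -, rfl⟩ := hcS hK; exact ⟨x, self_mem x⟩)
      (fun K hK => by obtain ⟨x, -, rfl⟩ := hcS hK; exact isCompact x)
      (fun K hK => by obtain ⟨x, -, rfl⟩ := hcS hK; exact (isCompact x).isClosed)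
    have below : ∀ K ∈ c, F y ⊆ K := fun K hK => by
      obtain ⟨x, -, rfl⟩ := hcS hK
      exact subset_of_mem x y (hy _ hK)
    obtain ⟨x₁, hx₁, rfl⟩ := hcS hK₀
    exact ⟨F y, ⟨y, subset_of_mem x₀ x₁ hx₁ (hy _ hK₀), rfl⟩, below⟩
  obtain ⟨_, -, ⟨x, hx, rfl⟩, hmin⟩ :=
    zorn_superset_nonempty S chain_bound (F x₀) ⟨x₀, self_mem x₀, rfl⟩
  refine ⟨x, hx, fun y hy => ?_⟩
  exact hmin ⟨y, subset_of_mem x₀ x hx hy, rfl⟩ (subset_of_mem x y hy) (self_mem x)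

section WeakDual

variable {𝕜 E F : Type*} [CommSemiring 𝕜] [TopologicalSpace 𝕜] [ContinuousAdd 𝕜]
  [ContinuousConstSMul 𝕜 𝕜] [AddCommMonoid E] [Module 𝕜 E] [TopologicalSpace E]
  [AddCommMonoid F] [Module 𝕜 F] [TopologicalSpace F]

theorem WeakDual.continuous_toWeakDual_comp (T : E →L[𝕜] F) :
    Continuous fun w : WeakDual 𝕜 F => StrongDual.toWeakDual (toStrongDual w ∘L T) :=
  continuous_of_continuous_eval fun y => eval_continuous (T y)

end WeakDual

section ConvexHullSubmonoid

variable (R : Type*) {E : Type*} [CommSemiring R] [PartialOrder R] [Semiring E] [Algebra R E]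

theorem convexHull_mul_subset {s : Set E} (hs : s * s ⊆ s) :
    convexHull R s * convexHull R s ⊆ convexHull R s := by
  have left : ∀ a ∈ s, ∀ b ∈ convexHull R s, a * b ∈ convexHull R s := fun a ha =>
    convexHull_min (fun b hb => subset_convexHull R s (hs (Set.mul_mem_mul ha hb)))
      ((convex_convexHull R s).linear_preimage (LinearMap.mulLeft R a))
  rintro _ ⟨a, ha, b, hb, rfl⟩
  exact convexHull_min (fun a ha => left a ha b hb)
    ((convex_convexHull R s).linear_preimage (LinearMap.mulRight R b)) ha

def Submonoid.convexHull (S : Submonoid E) : Submonoid E where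
  carrier := _root_.convexHull R S
  one_mem' := subset_convexHull R (S : Set E) S.one_mem
  mul_mem' ha hb := convexHull_mul_subset R (fun _ ⟨_, ha, _, hb, h⟩ => h ▸ S.mul_mem ha hb)
    (Set.mul_mem_mul ha hb)

end ConvexHullSubmonoid

namespace CStarAlgebra

open Filter Topology StrongDual WeakDual

variable {B : Type*} [CStarAlgebra B]

def conjugationHom : B →* (B →L[ℂ] B) where
  toFun a := ContinuousLinearMap.mulLeftRight ℂ B a (star a)
  map_one' := by ext; simp
  map_mul' a b := by ext; simp [mul_assoc]

@[simp]
theorem conjugationHom_apply (a x : B) : conjugationHom a x = a * x * star a := rfl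

variable (B) in
def averagingMonoid : Submonoid (B →L[ℂ] B) :=
  Submonoid.convexHull ℝ ((unitary B).map conjugationHom)

theorem averagingMonoid_induction {p : Set (B →L[ℂ] B)} (hp : Convex ℝ p)
    (hconj : ∀ u ∈ unitary B, conjugationHom u ∈ p) {T : B →L[ℂ] B}
    (hT : T ∈ averagingMonoid B) : T ∈ p :=
  convexHull_min (by rintro _ ⟨u, hu, rfl⟩; exact hconj u hu) hp hT

theorem norm_le_one_of_mem_averagingMonoid {T : B →L[ℂ] B} (hT : T ∈ averagingMonoid B) :
    ‖T‖ ≤ 1 := by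
  refine mem_closedBall_zero_iff.mp
    (averagingMonoid_induction (convex_closedBall 0 1) (fun u hu => ?_) hT)
  refine mem_closedBall_zero_iff.mpr
    (ContinuousLinearMap.opNorm_le_bound _ zero_le_one fun x => ?_)
  rw [conjugationHom_apply, CStarRing.norm_mul_mem_unitary _ (Unitary.star_mem hu),
    CStarRing.norm_mem_unitary_mul _ hu, one_mul]

theorem apply_eq_self_of_mem_averagingMonoid {T : B →L[ℂ] B} (hT : T ∈ averagingMonoid B)
    {z : B} (hz : z ∈ Subalgebra.center ℂ B) : T z = z := by
  refine averagingMonoid_induction (p := {T | T z = z}) ?_ (fun u hu => ?_) hT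
  · exact (convex_singleton z).linear_preimage
      ((ContinuousLinearMap.apply ℂ B z).toLinearMap.restrictScalars ℝ)
  · show u * z * star u = z
    rw [Subalgebra.mem_center_iff.mp hz u, mul_assoc, Unitary.mul_star_self_of_mem hu, mul_one]

theorem dixE_eq (a : B) :
    DixE B (unitary B : Set B) a =
      closure ((fun T : B →L[ℂ] B => T a) '' averagingMonoid B) := by
  have := ((ContinuousLinearMap.apply ℂ B a).toLinearMap.restrictScalars ℝ).image_convexHull
    (conjugationHom '' unitary B)
  rw [Set.image_image] at this
  exact (congrArg closure this).symm

theorem dix_eq_preimage_closure (φ : B →L[ℂ] ℂ) :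
    Dix B φ = toWeakDual ⁻¹' closure ((fun T => toWeakDual (φ ∘L T)) '' averagingMonoid B) := by
  have := ((ContinuousLinearMap.compL ℂ B B ℂ φ).toLinearMap.restrictScalars ℝ).image_convexHull
    (conjugationHom '' unitary B)
  rw [Set.image_image] at this
  rw [← Set.image_image toWeakDual]
  exact congrArg (fun s => toWeakDual ⁻¹' closure (toWeakDual '' s)) this.symm

theorem mem_dix_iff {φ ψ : B →L[ℂ] ℂ} :
    ψ ∈ Dix B φ ↔
      toWeakDual ψ ∈ closure ((fun T => toWeakDual (φ ∘L T)) '' averagingMonoid B) := by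
  rw [dix_eq_preimage_closure, Set.mem_preimage]

theorem mem_dix_self (φ : B →L[ℂ] ℂ) : φ ∈ Dix B φ :=
  mem_dix_iff.2 (subset_closure ⟨1, one_mem _, congrArg toWeakDual φ.comp_id⟩)

theorem comp_mem_dix {φ ψ : B →L[ℂ] ℂ} (hψ : ψ ∈ Dix B φ) {T : B →L[ℂ] B}
    (hT : T ∈ averagingMonoid B) : ψ ∘L T ∈ Dix B φ := by
  rw [mem_dix_iff] at hψ ⊢
  refine map_mem_closure (f := fun w : WeakDual ℂ B => toWeakDual (toStrongDual w ∘L T))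
    (continuous_toWeakDual_comp T) hψ ?_
  rintro _ ⟨S, hS, rfl⟩
  exact ⟨S * T, mul_mem hS hT, rfl⟩

theorem dix_subset_of_mem {φ τ : B →L[ℂ] ℂ} (hτ : τ ∈ Dix B φ) : Dix B τ ⊆ Dix B φ := by
  intro ψ hψ
  rw [mem_dix_iff] at hψ ⊢
  refine closure_minimal ?_ isClosed_closure hψ
  rintro _ ⟨T, hT, rfl⟩
  simpa only [mem_dix_iff] using comp_mem_dix hτ hT

theorem apply_eq_of_mem_dix {φ σ : B →L[ℂ] ℂ} (hσ : σ ∈ Dix B φ) {z : B}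
    (hz : z ∈ Subalgebra.center ℂ B) : σ z = φ z := by
  rw [mem_dix_iff] at hσ
  refine closure_minimal (t := {w : WeakDual ℂ B | w z = φ z}) ?_
    (isClosed_eq (WeakDual.eval_continuous z) continuous_const) hσ
  rintro _ ⟨T, hT, rfl⟩
  exact congrArg φ (apply_eq_self_of_mem_averagingMonoid hT hz)

theorem isCompact_dix (φ : B →L[ℂ] ℂ) : IsCompact (toStrongDual ⁻¹' Dix B φ) := by
  have ball := WeakDual.isCompact_closedBall (𝕜 := ℂ) (0 : B →L[ℂ] ℂ) ‖φ‖
  rw [dix_eq_preimage_closure]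
  refine ball.of_isClosed_subset isClosed_closure (closure_minimal ?_ ball.isClosed)
  rintro _ ⟨T, hT, rfl⟩
  rw [Set.mem_preimage, mem_closedBall_zero_iff]
  calc ‖φ ∘L T‖ ≤ ‖φ‖ * ‖T‖ := φ.opNorm_comp_le T
    _ ≤ ‖φ‖ := mul_le_of_le_one_right (norm_nonneg φ) (norm_le_one_of_mem_averagingMonoid hT)

theorem exists_maxMixed_mem_dix (φ : B →L[ℂ] ℂ) : ∃ σ ∈ Dix B φ, MaxMixed B σ :=
  exists_mem_minimal_of_isCompact (fun w => toStrongDual ⁻¹' Dix B (toStrongDual w))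
    (fun _ => mem_dix_self _) (fun _ => isCompact_dix _)
    (fun _ _ h => Set.preimage_mono (dix_subset_of_mem h)) (toWeakDual φ)

theorem _root_.MaxMixed.dix_eq {φ σ : B →L[ℂ] ℂ} (hφ : MaxMixed B φ) (hσ : σ ∈ Dix B φ) :
    Dix B σ = Dix B φ :=
  (dix_subset_of_mem hσ).antisymm (dix_subset_of_mem (hφ σ hσ))

theorem exists_restrZ_eq (μ : Subalgebra.center ℂ B →L[ℂ] ℂ) :
    ∃ φ : B →L[ℂ] ℂ, restrZ B φ = μ := by
  obtain ⟨φ, hφ, -⟩ :=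
    exists_extension_norm_eq (Subalgebra.toSubmodule (Subalgebra.center ℂ B)) μ
  exact ⟨φ, ContinuousLinearMap.ext hφ⟩

theorem exists_mem_averagingMonoid_norm_sub_lt {a z : B}
    (hz : z ∈ DixE B (unitary B : Set B) a) {ε : ℝ} (hε : 0 < ε) :
    ∃ T ∈ averagingMonoid B, ‖T a - z‖ < ε := by
  rw [dixE_eq] at hz
  obtain ⟨_, ⟨T, hT, rfl⟩, h⟩ := Metric.mem_closure_iff.mp hz ε hε
  exact ⟨T, hT, by rwa [← dist_eq_norm, dist_comm]⟩

theorem exists_mem_averagingMonoid_forall_near_center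
    (hDP : ∀ a : B, ∃ z ∈ DixE B (unitary B : Set B) a, z ∈ Subalgebra.center ℂ B)
    (F : Finset B) {ε : ℝ} (hε : 0 < ε) :
    ∃ T ∈ averagingMonoid B, ∀ a ∈ F, ∃ z ∈ Subalgebra.center ℂ B, ‖T a - z‖ < ε := by
  classical
  induction F using Finset.induction_on with
  | empty => exact ⟨1, one_mem _, by simp⟩
  | insert a F _ ih =>
    obtain ⟨T, hT, hTF⟩ := ih
    obtain ⟨z, hzD, hz⟩ := hDP (T a)
    obtain ⟨S, hS, hSz⟩ := exists_mem_averagingMonoid_norm_sub_lt hzD hε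
    refine ⟨S * T, mul_mem hS hT, fun b hb => ?_⟩
    obtain rfl | hb := Finset.mem_insert.mp hb
    · exact ⟨z, hz, hSz⟩
    obtain ⟨z', hz', hbz'⟩ := hTF b hb
    refine ⟨z', hz', ?_⟩
    calc ‖S (T b) - z'‖ = ‖S (T b - z')‖ := by
          rw [map_sub, apply_eq_self_of_mem_averagingMonoid hS hz']
      _ ≤ 1 * ‖T b - z'‖ := S.le_of_opNorm_le (norm_le_one_of_mem_averagingMonoid hS) _
      _ = ‖T b - z'‖ := one_mul _
      _ < ε := hbz'

theorem tendsto_apply_of_forall_near_center {χ : B →L[ℂ] ℂ}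
    (hχ : ∀ z ∈ Subalgebra.center ℂ B, χ z = 0) {T : Finset B × ℕ → B →L[ℂ] B}
    (hT : ∀ i, ∀ a ∈ i.1, ∃ z ∈ Subalgebra.center ℂ B, ‖T i a - z‖ < 1 / (i.2 + 1)) (a : B) :
    Tendsto (fun i => χ (T i a)) atTop (𝓝 0) := by
  classical
  have bound : Tendsto (fun i : Finset B × ℕ => ‖χ‖ * (1 / (i.2 + 1 : ℝ))) atTop (𝓝 0) := by
    have snd : Tendsto (Prod.snd : Finset B × ℕ → ℕ) atTop atTop :=
      tendsto_atTop_atTop.2 fun n => ⟨(∅, n), fun i hi => hi.2⟩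
    simpa only [mul_zero, Function.comp_def] using
      (tendsto_one_div_add_atTop_nhds_zero_nat.const_mul ‖χ‖).comp snd
  refine squeeze_zero_norm' (eventually_atTop.2 ⟨({a}, 0), fun i hi => ?_⟩) bound
  obtain ⟨z, hz, hTz⟩ := hT i a (Finset.singleton_subset_iff.mp hi.1)
  calc ‖χ (T i a)‖ = ‖χ (T i a - z)‖ := by rw [map_sub, hχ z hz, sub_zero]
    _ ≤ ‖χ‖ * ‖T i a - z‖ := χ.le_opNorm _
    _ ≤ ‖χ‖ * (1 / (i.2 + 1)) := by gcongr

theorem dix_inter_dix_nonempty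
    (hDP : ∀ a : B, ∃ z ∈ DixE B (unitary B : Set B) a, z ∈ Subalgebra.center ℂ B)
    {φ ψ : B →L[ℂ] ℂ} (h : ∀ z ∈ Subalgebra.center ℂ B, φ z = ψ z) :
    (Dix B φ ∩ Dix B ψ).Nonempty := by
  classical
  choose T hT hTF using fun i : Finset B × ℕ =>
    exists_mem_averagingMonoid_forall_near_center hDP i.1 (Nat.one_div_pos_of_nat (n := i.2))
  set K := (fun p : WeakDual ℂ B × WeakDual ℂ B => p.1 - p.2) ''
    ((toStrongDual ⁻¹' Dix B φ) ×ˢ (toStrongDual ⁻¹' Dix B ψ))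
  have hK : IsClosed K :=
    (((isCompact_dix φ).prod (isCompact_dix ψ)).image continuous_sub).isClosed
  have mem : ∀ i, toWeakDual ((φ - ψ) ∘L T i) ∈ K := fun i =>
    ⟨(toWeakDual (φ ∘L T i), toWeakDual (ψ ∘L T i)),
      ⟨comp_mem_dix (mem_dix_self φ) (hT i), comp_mem_dix (mem_dix_self ψ) (hT i)⟩,
      by simp [ContinuousLinearMap.sub_comp]⟩
  have tendsto : Tendsto (fun i => toWeakDual ((φ - ψ) ∘L T i)) atTop (𝓝 0) := by
    refine tendsto_iff_forall_eval_tendsto_topDualPairing.2 fun a => ?_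
    exact tendsto_apply_of_forall_near_center (χ := φ - ψ)
      (fun z hz => sub_eq_zero.2 (h z hz)) hTF a
  obtain ⟨⟨σ, τ⟩, ⟨hσ, hτ⟩, hστ⟩ := hK.mem_of_tendsto tendsto (Eventually.of_forall mem)
  obtain rfl : σ = τ := sub_eq_zero.mp hστ
  exact ⟨toStrongDual σ, hσ, hτ⟩

end CStarAlgebra

open CStarAlgebra in
/-- Let `A` be a unital C*-algebra with the Dixmier property.  Then:
(a) every bounded linear functional on the center `Z(A)` is the restriction of some
maximally mixed functional on `A`; (b) two maximally mixed functionals agreeing on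
`Z(A)` generate the same Dixmier set.  Consequently `φ ↦ φ|_{Z(A)}` induces a bijection
between equivalence classes of maximally mixed functionals and bounded functionals
on `Z(A)`. -/
theorem stmt16 (A : Type*) [CStarAlgebra A]
    (hDP : ∀ a : A, ∃ z ∈ DixE A (unitary A : Set A) a, z ∈ Subalgebra.center ℂ A) :
    (∀ μ : (Subalgebra.center ℂ A) →L[ℂ] ℂ,
        ∃ φ : A →L[ℂ] ℂ, MaxMixed A φ ∧ restrZ A φ = μ) ∧
    (∀ φ ψ : A →L[ℂ] ℂ, MaxMixed A φ → MaxMixed A ψ →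
        restrZ A φ = restrZ A ψ → Dix A φ = Dix A ψ) := by
  refine ⟨fun μ => ?_, fun φ ψ hφ hψ hres => ?_⟩
  · obtain ⟨φ, rfl⟩ := exists_restrZ_eq μ
    obtain ⟨σ, hσ, hmax⟩ := exists_maxMixed_mem_dix φ
    exact ⟨σ, hmax, ContinuousLinearMap.ext fun z => apply_eq_of_mem_dix hσ z.2⟩
  · obtain ⟨σ, hσφ, hσψ⟩ := dix_inter_dix_nonempty hDP fun z hz => congrArg (· ⟨z, hz⟩) hres
    rw [← hφ.dix_eq hσφ, ← hψ.dix_eq hσψ]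
end
end

section
/- Let A be a unital C*-algebra with the Dixmier property and let φ ∈ A*_+. Then φ is maximally mixed if and only if φ(a) ≤ sup{φ(z) : z ∈ D_A(a) ∩ Z(A)} for every positive element a ∈ A. -/
open scoped ComplexOrder Pointwise

noncomputable section

variable (A : Type*) [CStarAlgebra A]

/-!
If `φ` is maximally mixed, put `β := sup {Re φ(z) : z ∈ D(a) ∩ Z(A)}`. By the Dixmier property,
finitely many elements of `D(a)` can be pushed simultaneously close to the centre by a single
convex combination `T` of unitary conjugations, and `φ ∘ T ∈ D(φ)`; Banach–Alaoglu compactness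
of `D(φ)` then yields `ψ ∈ D(φ)` with `Re ψ ≤ β` on all of `D(a)`. Since `φ ∈ D(ψ)` and
`Re χ(a) ≤ β` is a weak*-closed convex condition satisfied by every `uψu*`, `Re φ(a) ≤ β`.

Conversely, if `φ ∉ D(ψ)` for some `ψ ∈ D(φ)`, Hahn–Banach in the weak* topology gives `a`
with `Re ψ(uau*) ≤ r < Re φ(a)` for all unitaries `u`. Positivity lets us replace `a` by its real
part `b`, and then by the positive element `c = ‖b‖ + b`. Functionals in `D(φ)` agree with `φ` on
the centre, so every central `z ∈ D(c)` has `Re φ(z) = Re ψ(z) ≤ ‖b‖ φ(1) + r < Re φ(c)`,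
contradicting the hypothesis at `c`.
-/

open Set

variable {A}

def conjCLM (u : A) : A →L[ℂ] A := ContinuousLinearMap.mulLeftRight ℂ A u (star u)

@[simp]
lemma conjCLM_apply (u x : A) : conjCLM u x = u * x * star u := rfl

lemma conjCLM_mul (u v : A) : conjCLM (u * v) = conjCLM u * conjCLM v := by
  ext x
  simp [star_mul, mul_assoc]

lemma conjCLM_apply_of_mem_center {u z : A} (hu : u ∈ unitary A)
    (hz : z ∈ Subalgebra.center ℂ A) : conjCLM u z = z := by
  rw [conjCLM_apply, Subalgebra.mem_center_iff.mp hz u, mul_assoc,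
    Unitary.mul_star_self_of_mem hu, mul_one]

lemma norm_conjCLM_le {u : A} (hu : u ∈ unitary A) : ‖conjCLM u‖ ≤ 1 :=
  ContinuousLinearMap.opNorm_le_bound _ zero_le_one fun x => by
    rw [one_mul, conjCLM_apply, CStarRing.norm_mul_mem_unitary _ (Unitary.star_mem hu),
      CStarRing.norm_mem_unitary_mul _ hu]

lemma mul_mem_convexHull {s : Set (A →L[ℂ] A)} (hs : ∀ S ∈ s, ∀ T ∈ s, S * T ∈ s)
    {S T : A →L[ℂ] A} (hS : S ∈ convexHull ℝ s) (hT : T ∈ convexHull ℝ s) :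
    S * T ∈ convexHull ℝ s := by
  have hleft : ∀ S ∈ s, convexHull ℝ s ⊆ {T | S * T ∈ convexHull ℝ s} := fun S hS =>
    convexHull_min (fun T hT => subset_convexHull ℝ s (hs S hS T hT))
      ((convex_convexHull ℝ s).is_linear_preimage
        ⟨mul_add S, fun c T => ContinuousLinearMap.comp_smul S c T⟩)
  refine convexHull_min (fun S' hS' => hleft S' hS' hT) ?_ hS
  exact (convex_convexHull ℝ s).is_linear_preimage
    ⟨fun S S' => add_mul S S' T, fun c S => ContinuousLinearMap.smul_comp c S T⟩

variable (A) in
def mixingOps : Submonoid (A →L[ℂ] A) where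
  carrier := convexHull ℝ (conjCLM '' unitary A)
  mul_mem' := by
    refine fun hS hT => mul_mem_convexHull ?_ hS hT
    rintro _ ⟨u, hu, rfl⟩ _ ⟨v, hv, rfl⟩
    exact ⟨u * v, mul_mem hu hv, conjCLM_mul u v⟩
  one_mem' := subset_convexHull ℝ _ ⟨1, one_mem _, by ext; simp⟩

variable (A) in
lemma coe_mixingOps :
    (mixingOps A : Set (A →L[ℂ] A)) = convexHull ℝ (conjCLM '' unitary A) := rfl

lemma mem_mixingOps {T : A →L[ℂ] A} :
    T ∈ mixingOps A ↔ T ∈ convexHull ℝ (conjCLM '' unitary A) := Iff.rfl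

lemma conjCLM_mem_mixingOps {u : A} (hu : u ∈ unitary A) : conjCLM u ∈ mixingOps A :=
  subset_convexHull ℝ _ (mem_image_of_mem _ hu)

lemma mixingOps_apply_of_mem_center {T : A →L[ℂ] A} (hT : T ∈ mixingOps A) {z : A}
    (hz : z ∈ Subalgebra.center ℂ A) : T z = z := by
  refine convexHull_min ?_ ((convex_singleton z).is_linear_preimage
    (f := fun T : A →L[ℂ] A => T z) ⟨fun _ _ => rfl, fun _ _ => rfl⟩) (mem_mixingOps.mp hT)
  rintro _ ⟨u, hu, rfl⟩
  exact conjCLM_apply_of_mem_center hu hz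

lemma norm_le_one_of_mem_mixingOps {T : A →L[ℂ] A} (hT : T ∈ mixingOps A) : ‖T‖ ≤ 1 := by
  refine mem_closedBall_zero_iff.mp
    (convexHull_min ?_ (convex_closedBall 0 1) (mem_mixingOps.mp hT))
  rintro _ ⟨u, hu, rfl⟩
  exact mem_closedBall_zero_iff.mpr (norm_conjCLM_le hu)

lemma norm_apply_le_of_mem_mixingOps {T : A →L[ℂ] A} (hT : T ∈ mixingOps A) (x : A) :
    ‖T x‖ ≤ ‖x‖ :=
  (T.le_of_opNorm_le (norm_le_one_of_mem_mixingOps hT) x).trans_eq (one_mul _)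

lemma convexHull_conj_eq_image (a : A) :
    convexHull ℝ ((fun u => u * a * star u) '' (unitary A : Set A)) =
      (fun T : A →L[ℂ] A => T a) '' mixingOps A := by
  rw [coe_mixingOps A, IsLinearMap.image_convexHull ⟨fun _ _ => rfl, fun _ _ => rfl⟩, image_image]
  rfl

lemma DixE_eq_closure_image (a : A) :
    DixE A (unitary A) a = closure ((fun T : A →L[ℂ] A => T a) '' mixingOps A) := by
  rw [DixE, convexHull_conj_eq_image]

lemma self_mem_DixE (a : A) : a ∈ DixE A (unitary A) a := by
  rw [DixE_eq_closure_image]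
  exact subset_closure ⟨1, one_mem _, rfl⟩

lemma norm_le_of_mem_DixE {a x : A} (hx : x ∈ DixE A (unitary A) a) : ‖x‖ ≤ ‖a‖ := by
  rw [DixE_eq_closure_image] at hx
  refine mem_closedBall_zero_iff.mp (closure_minimal ?_ Metric.isClosed_closedBall hx)
  rintro _ ⟨T, hT, rfl⟩
  exact mem_closedBall_zero_iff.mpr (norm_apply_le_of_mem_mixingOps hT a)

lemma mixingOps_apply_mem_DixE {T : A →L[ℂ] A} (hT : T ∈ mixingOps A) {a x : A}
    (hx : x ∈ DixE A (unitary A) a) : T x ∈ DixE A (unitary A) a := by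
  rw [DixE_eq_closure_image] at hx ⊢
  refine map_mem_closure T.continuous hx ?_
  rintro _ ⟨S, hS, rfl⟩
  exact ⟨T * S, mul_mem hT hS, rfl⟩

lemma DixE_subset_of_mem {a b : A} (hb : b ∈ DixE A (unitary A) a) :
    DixE A (unitary A) b ⊆ DixE A (unitary A) a := by
  rw [DixE_eq_closure_image b]
  refine closure_minimal ?_ isClosed_closure
  rintro _ ⟨T, hT, rfl⟩
  exact mixingOps_apply_mem_DixE hT hb

lemma re_apply_le_of_mem_DixE {V : Set A} (ψ : A →L[ℂ] ℂ) {a : A} {r : ℝ}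
    (h : ∀ u ∈ V, (ψ (u * a * star u)).re ≤ r) {y : A} (hy : y ∈ DixE A V a) :
    (ψ y).re ≤ r :=
  closure_minimal (convexHull_min (by rintro _ ⟨u, hu, rfl⟩; exact h u hu)
      (convex_halfSpace_le (f := fun y => (ψ y).re) ⟨fun _ _ => by simp, fun _ _ => by simp⟩ r))
    (isClosed_le (Complex.continuous_re.comp ψ.continuous) continuous_const) hy

lemma conjF_eq_comp (u : A) (φ : A →L[ℂ] ℂ) : conjF A u φ = φ.comp (conjCLM u) := rfl

lemma convexHull_conjF_eq_image (φ : A →L[ℂ] ℂ) :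
    convexHull ℝ ((fun u => conjF A u φ) '' (unitary A : Set A)) =
      (fun T : A →L[ℂ] A => φ.comp T) '' mixingOps A := by
  rw [coe_mixingOps A, IsLinearMap.image_convexHull ⟨fun S T => φ.comp_add S T,
    fun c T => ContinuousLinearMap.comp_smul φ c T⟩, image_image]
  rfl

lemma comp_mem_Dix (φ : A →L[ℂ] ℂ) {T : A →L[ℂ] A} (hT : T ∈ mixingOps A) :
    φ.comp T ∈ Dix A φ := by
  have h : φ.comp T ∈ convexHull ℝ ((fun u => conjF A u φ) '' (unitary A : Set A)) := by
    rw [convexHull_conjF_eq_image]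
    exact mem_image_of_mem _ hT
  exact subset_closure (X := WeakDual ℂ A) (mem_image_of_mem _ h)

lemma DixF_subset_preimage {V : Set A} {φ : A →L[ℂ] ℂ} {C : Set (WeakDual ℂ A)}
    (hC : IsClosed C) (hconv : Convex ℝ (StrongDual.toWeakDual ⁻¹' C))
    (hV : ∀ u ∈ V, StrongDual.toWeakDual (conjF A u φ) ∈ C) :
    DixF A V φ ⊆ StrongDual.toWeakDual ⁻¹' C := fun _ hψ =>
  closure_minimal (image_subset_iff.mpr (convexHull_min (image_subset_iff.mpr hV) hconv)) hC hψ

lemma apply_eq_of_mem_Dix_of_mem_center {φ ψ : A →L[ℂ] ℂ} (hψ : ψ ∈ Dix A φ) {z : A}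
    (hz : z ∈ Subalgebra.center ℂ A) : ψ z = φ z := by
  refine DixF_subset_preimage (C := {χ | χ z = φ z})
    (isClosed_eq (WeakDual.eval_continuous z) continuous_const)
    ((convex_singleton (φ z)).is_linear_preimage ⟨fun _ _ => rfl, fun _ _ => rfl⟩) ?_ hψ
  intro u hu
  exact congrArg φ (conjCLM_apply_of_mem_center hu hz)

lemma isCompact_Dix (φ : A →L[ℂ] ℂ) : IsCompact (WeakDual.toStrongDual ⁻¹' Dix A φ) := by
  refine (WeakDual.isCompact_closedBall 0 ‖φ‖).of_isClosed_subset ?_ ?_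
  · simp only [Dix, DixF, wsClosure, preimage_preimage, WeakDual.toWeakDual_toStrongDual,
      preimage_id']
    exact isClosed_closure
  refine DixF_subset_preimage (WeakDual.isClosed_closedBall 0 ‖φ‖) (convex_closedBall 0 ‖φ‖) ?_
  intro u hu
  show conjF A u φ ∈ Metric.closedBall 0 ‖φ‖
  rw [mem_closedBall_zero_iff, conjF_eq_comp]
  exact (φ.opNorm_comp_le _).trans (mul_le_of_le_one_right (norm_nonneg φ) (norm_conjCLM_le hu))

lemma IsPos.conjF {φ : A →L[ℂ] ℂ} (hφ : IsPos A φ) (u : A) : IsPos A (conjF A u φ) := by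
  intro x
  have : u * (star x * x) * star u = star (x * star u) * (x * star u) := by
    simp only [star_mul, star_star, mul_assoc]
  rw [conjF_eq_comp, ContinuousLinearMap.comp_apply, conjCLM_apply, this]
  exact hφ _

lemma IsPos.of_mem_Dix {φ ψ : A →L[ℂ] ℂ} (hφ : IsPos A φ) (hψ : ψ ∈ Dix A φ) : IsPos A ψ :=
  fun x => DixF_subset_preimage (C := {χ | 0 ≤ χ (star x * x)})
    (isClosed_Ici.preimage (WeakDual.eval_continuous _))
    (convex_halfSpace_ge (f := fun χ : A →L[ℂ] ℂ => χ (star x * x))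
      ⟨fun _ _ => rfl, fun _ _ => rfl⟩ 0) (fun u _ => hφ.conjF u x) hψ

lemma exists_algebraMap_norm_add_eq_star_mul_self {b : A} (hb : IsSelfAdjoint b) :
    ∃ x : A, algebraMap ℝ A ‖b‖ + b = star x * x := by
  -- `CStarAlgebra` carries no order instance; use the spectral order locally
  let _ := CStarAlgebra.spectralOrder A
  have _ := CStarAlgebra.spectralOrderedRing A
  exact CStarAlgebra.nonneg_iff_eq_star_mul_self.mp
    (neg_le_iff_add_nonneg'.mp hb.neg_algebraMap_norm_le_self)

lemma re_apply_algebraMap (χ : A →L[ℂ] ℂ) (t : ℝ) :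
    (χ (algebraMap ℝ A t)).re = t * (χ 1).re := by
  rw [Algebra.algebraMap_eq_smul_one, χ.map_smul_of_tower, Complex.smul_re, smul_eq_mul]

lemma IsPos.im_apply_star_mul_self {χ : A →L[ℂ] ℂ} (hχ : IsPos A χ) (x : A) :
    (χ (star x * x)).im = 0 :=
  (Complex.nonneg_iff.mp (hχ x)).2.symm

lemma IsPos.im_apply_eq_zero {χ : A →L[ℂ] ℂ} (hχ : IsPos A χ) {y : A} (hy : IsSelfAdjoint y) :
    (χ y).im = 0 := by
  obtain ⟨x, hx⟩ := exists_algebraMap_norm_add_eq_star_mul_self hy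
  have hdecomp : y = star x * x - ‖y‖ • (star 1 * 1) := by
    rw [← hx, star_one, one_mul, Algebra.algebraMap_eq_smul_one, add_sub_cancel_left]
  rw [hdecomp, map_sub, χ.map_smul_of_tower, Complex.sub_im, Complex.smul_im,
    hχ.im_apply_star_mul_self, hχ.im_apply_star_mul_self, smul_zero, sub_zero]

lemma IsPos.re_apply_realPart {χ : A →L[ℂ] ℂ} (hχ : IsPos A χ) (a : A) :
    (χ (realPart a : A)).re = (χ a).re := by
  conv_rhs => rw [← realPart_add_I_smul_imaginaryPart a]
  rw [map_add, map_smul, smul_eq_mul, Complex.add_re, Complex.mul_re, Complex.I_re,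
    Complex.I_im, hχ.im_apply_eq_zero (imaginaryPart a).2]
  ring

lemma exists_separating_of_notMem_DixF {V : Set A} {φ ψ : A →L[ℂ] ℂ} (h : φ ∉ DixF A V ψ) :
    ∃ a : A, ∃ r : ℝ, (∀ u ∈ V, (ψ (u * a * star u)).re ≤ r) ∧ r < (φ a).re := by
  -- the real locally convex structure of the weak* dual, which instance search does not find
  let _ : Module ℝ (WeakDual ℂ A) := WeakDual.instModule' ℝ
  have _ : LocallyConvexSpace ℝ (WeakDual ℂ A) := WeakBilin.locallyConvexSpace
  set S : Set (WeakDual ℂ A) :=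
    StrongDual.toWeakDual '' convexHull ℝ ((fun u => conjF A u ψ) '' V)
  have hconv : Convex ℝ S :=
    (convex_convexHull ℝ _).is_linear_image ⟨fun _ _ => rfl, fun _ _ => rfl⟩
  have h' : StrongDual.toWeakDual φ ∉ closure S := h
  obtain ⟨f, r, hS, hφ⟩ :=
    RCLike.geometric_hahn_banach_closed_point (𝕜 := ℂ) hconv.closure isClosed_closure h'
  obtain ⟨a, rfl⟩ := LinearMap.dualEmbedding_surjective _ f
  exact ⟨a, r, fun u hu => (hS _ (subset_closure (mem_image_of_mem _
    (subset_convexHull ℝ _ (mem_image_of_mem _ hu))))).le, hφ⟩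

variable (A) in
def HasDixmierProperty : Prop :=
  ∀ a : A, ∃ z ∈ DixE A (unitary A : Set A) a, z ∈ Subalgebra.center ℂ A

theorem HasDixmierProperty.exists_mixingOps_near_center (hDP : HasDixmierProperty A)
    (s : Finset A) {ε : ℝ} (hε : 0 < ε) :
    ∃ T ∈ mixingOps A, ∀ b ∈ s, ∃ z ∈ DixE A (unitary A) b ∩ Subalgebra.center ℂ A,
      ‖T b - z‖ < ε := by
  classical
  induction s using Finset.induction_on with
  | empty => exact ⟨1, one_mem _, by simp⟩
  | insert b s _ ih =>
    obtain ⟨T, hT, hs⟩ := ih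
    obtain ⟨z, hzD, hzZ⟩ := hDP (T b)
    rw [DixE_eq_closure_image] at hzD
    obtain ⟨_, ⟨S, hS, rfl⟩, hSz⟩ := Metric.mem_closure_iff.mp hzD ε hε
    refine ⟨S * T, mul_mem hS hT, fun c hc => ?_⟩
    rcases Finset.mem_insert.mp hc with rfl | hc
    · refine ⟨z, ⟨DixE_subset_of_mem (mixingOps_apply_mem_DixE hT (self_mem_DixE c)) ?_, hzZ⟩, ?_⟩
      · rw [DixE_eq_closure_image]; exact hzD
      · rwa [dist_comm, dist_eq_norm] at hSz
    · obtain ⟨z', hz', hTz'⟩ := hs c hc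
      refine ⟨z', hz', ?_⟩
      calc ‖(S * T) c - z'‖ = ‖S (T c - z')‖ := by
            rw [map_sub, mixingOps_apply_of_mem_center hS hz'.2]; rfl
        _ ≤ ‖T c - z'‖ := norm_apply_le_of_mem_mixingOps hS _
        _ < ε := hTz'

def centralSup (φ : A →L[ℂ] ℂ) (a : A) : ℝ :=
  sSup ((fun z => (φ z).re) '' (DixE A (unitary A : Set A) a ∩ (Subalgebra.center ℂ A : Set A)))

lemma re_apply_le_centralSup (φ : A →L[ℂ] ℂ) {a b z : A} (hb : b ∈ DixE A (unitary A) a)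
    (hz : z ∈ DixE A (unitary A) b ∩ Subalgebra.center ℂ A) : (φ z).re ≤ centralSup φ a := by
  refine le_csSup ⟨‖φ‖ * ‖a‖, ?_⟩ ⟨z, ⟨DixE_subset_of_mem hb hz.1, hz.2⟩, rfl⟩
  rintro _ ⟨y, ⟨hy, _⟩, rfl⟩
  calc (φ y).re ≤ ‖φ y‖ := Complex.re_le_norm _
    _ ≤ ‖φ‖ * ‖y‖ := φ.le_opNorm y
    _ ≤ ‖φ‖ * ‖a‖ := by gcongr; exact norm_le_of_mem_DixE hy

lemma centralSup_le (hDP : HasDixmierProperty A) {φ ψ : A →L[ℂ] ℂ} (hψ : ψ ∈ Dix A φ) {a : A}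
    {r : ℝ} (h : ∀ u ∈ unitary A, (ψ (u * a * star u)).re ≤ r) : centralSup φ a ≤ r := by
  obtain ⟨z₀, hz₀⟩ := hDP a
  refine csSup_le ⟨_, ⟨z₀, hz₀, rfl⟩⟩ ?_
  rintro _ ⟨z, ⟨hzD, hzZ⟩, rfl⟩
  show (φ z).re ≤ r
  rw [← apply_eq_of_mem_Dix_of_mem_center hψ hzZ]
  exact re_apply_le_of_mem_DixE ψ h hzD

theorem HasDixmierProperty.exists_mixingOps_re_le (hDP : HasDixmierProperty A)
    (φ : A →L[ℂ] ℂ) {a : A} {s : Finset A} (hs : ∀ b ∈ s, b ∈ DixE A (unitary A) a)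
    {ε : ℝ} (hε : 0 < ε) :
    ∃ T ∈ mixingOps A, ∀ b ∈ s, (φ (T b)).re ≤ centralSup φ a + ε := by
  obtain ⟨T, hT, hnear⟩ :=
    hDP.exists_mixingOps_near_center s (div_pos hε (by positivity : (0 : ℝ) < ‖φ‖ + 1))
  refine ⟨T, hT, fun b hb => ?_⟩
  obtain ⟨z, hz, hTz⟩ := hnear b hb
  have hsmall : ‖φ‖ * (ε / (‖φ‖ + 1)) ≤ ε := by
    rw [mul_div_assoc', div_le_iff₀ (by positivity)]
    nlinarith [norm_nonneg φ]
  calc (φ (T b)).re = (φ z).re + (φ (T b - z)).re := by rw [map_sub, Complex.sub_re]; ring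
    _ ≤ centralSup φ a + ‖φ‖ * (ε / (‖φ‖ + 1)) := by
        gcongr
        · exact re_apply_le_centralSup φ (hs b hb) hz
        · exact (Complex.re_le_norm _).trans ((φ.le_opNorm _).trans (by gcongr))
    _ ≤ centralSup φ a + ε := by gcongr

theorem HasDixmierProperty.exists_mem_Dix_re_le_centralSup (hDP : HasDixmierProperty A)
    (φ : A →L[ℂ] ℂ) (a : A) :
    ∃ ψ ∈ Dix A φ, ∀ b ∈ DixE A (unitary A) a, (ψ b).re ≤ centralSup φ a := by
  classical
  let Z : DixE A (unitary A) a × ℕ → Set (WeakDual ℂ A) :=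
    fun p => {ψ | (ψ p.1).re ≤ centralSup φ a + 1 / (p.2 + 1)}
  have hZ : ∀ p, IsClosed (Z p) := fun p =>
    isClosed_le (Complex.continuous_re.comp (WeakDual.eval_continuous _)) continuous_const
  have hfin : ∀ u : Finset _, (WeakDual.toStrongDual ⁻¹' Dix A φ ∩ ⋂ p ∈ u, Z p).Nonempty := by
    intro u
    obtain ⟨T, hT, hTu⟩ := hDP.exists_mixingOps_re_le φ (a := a) (s := u.image fun p => p.1)
      (by simp only [Finset.mem_image]; rintro _ ⟨p, -, rfl⟩; exact p.1.2)
      (Nat.one_div_pos_of_nat (n := u.sup Prod.snd))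
    refine ⟨StrongDual.toWeakDual (φ.comp T), comp_mem_Dix φ hT, mem_iInter₂.mpr fun p hp => ?_⟩
    calc (φ (T p.1)).re ≤ centralSup φ a + 1 / ((u.sup Prod.snd : ℕ) + 1) :=
          hTu _ (Finset.mem_image_of_mem _ hp)
      _ ≤ centralSup φ a + 1 / (p.2 + 1) := by
          gcongr
          exact_mod_cast Finset.le_sup (f := Prod.snd) hp
  obtain ⟨ψ, hψ, hψZ⟩ := (isCompact_Dix φ).inter_iInter_nonempty Z hZ hfin
  refine ⟨WeakDual.toStrongDual ψ, hψ, fun b hb => le_of_forall_pos_le_add fun ε hε => ?_⟩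
  obtain ⟨n, hn⟩ := exists_nat_one_div_lt hε
  exact (mem_iInter.mp hψZ (⟨b, hb⟩, n)).trans (by linarith)

theorem MaxMixed.re_apply_le_centralSup (hDP : HasDixmierProperty A) {φ : A →L[ℂ] ℂ}
    (hφ : MaxMixed A φ) (a : A) : (φ a).re ≤ centralSup φ a := by
  obtain ⟨ψ, hψ, hψa⟩ := hDP.exists_mem_Dix_re_le_centralSup φ a
  refine DixF_subset_preimage (C := {χ | (χ a).re ≤ centralSup φ a})
    (isClosed_le (Complex.continuous_re.comp (WeakDual.eval_continuous a)) continuous_const)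
    (convex_halfSpace_le (f := fun χ : A →L[ℂ] ℂ => (χ a).re)
      ⟨fun _ _ => by simp, fun _ _ => by simp⟩ _)
    (fun u hu => hψa _ ?_) (hφ ψ hψ)
  exact mixingOps_apply_mem_DixE (conjCLM_mem_mixingOps hu) (self_mem_DixE a)

theorem maxMixed_of_re_apply_le_centralSup (hDP : HasDixmierProperty A) {φ : A →L[ℂ] ℂ}
    (hφ : IsPos A φ) (h : ∀ a : A, (∃ x : A, a = star x * x) → (φ a).re ≤ centralSup φ a) :
    MaxMixed A φ := by
  intro ψ hψ
  by_contra hφψ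
  obtain ⟨a, r, hψa, hφa⟩ := exists_separating_of_notMem_DixF hφψ
  set b : A := (realPart a : A)
  set c : A := algebraMap ℝ A ‖b‖ + b
  obtain ⟨x, hx⟩ := exists_algebraMap_norm_add_eq_star_mul_self (realPart a).2
  have hψ1 : ψ 1 = φ 1 := apply_eq_of_mem_Dix_of_mem_center hψ (one_mem _)
  have hsup : centralSup φ c ≤ ‖b‖ * (φ 1).re + r := by
    refine centralSup_le hDP hψ fun u hu => ?_
    have hc : u * c * star u = algebraMap ℝ A ‖b‖ + u * b * star u := by
      rw [mul_add, add_mul, ← Algebra.commutes, mul_assoc, Unitary.mul_star_self_of_mem hu, mul_one]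
    have hb : (ψ (u * b * star u)).re = (ψ (u * a * star u)).re :=
      ((hφ.of_mem_Dix hψ).conjF u).re_apply_realPart a
    rw [hc, map_add, Complex.add_re, re_apply_algebraMap, hψ1, hb]
    linarith [hψa u hu]
  have hc := h c ⟨x, hx⟩
  rw [map_add, Complex.add_re, re_apply_algebraMap, hφ.re_apply_realPart] at hc
  linarith

/-- Let `A` be a unital C*-algebra with the Dixmier property and let
`φ ∈ A*₊`.  Then `φ` is maximally mixed iff `φ(a) ≤ sup {φ(z) : z ∈ D_A(a) ∩ Z(A)}`
for every positive `a ∈ A` (positive elements are those of the form `x*x`; the values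
of `φ` on them are real, and are compared via their real parts). -/
theorem stmt17 (A : Type*) [CStarAlgebra A]
    (hDP : ∀ a : A, ∃ z ∈ DixE A (unitary A : Set A) a, z ∈ Subalgebra.center ℂ A)
    (φ : A →L[ℂ] ℂ) (hφ : IsPos A φ) :
    MaxMixed A φ ↔
      ∀ a : A, (∃ x : A, a = star x * x) →
        (φ a).re ≤ sSup ((fun z => (φ z).re) ''
          (DixE A (unitary A : Set A) a ∩ (Subalgebra.center ℂ A : Set A))) :=
  ⟨fun hmix a _ => hmix.re_apply_le_centralSup hDP a,
    maxMixed_of_re_apply_le_centralSup hDP hφ⟩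
end
end
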